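/- arXiv:2206.14067 — 3 statements merged into one kernel-verified Lean document; each statement's English description precedes it below -/
import Mathlib

section
/- Let a and b be relatively prime integers both greater than 1 and let c be an odd integer greater than 1. Suppose the equation a^x + b^y = c^z has two solutions in positive integers (x1, y1, z1) and (x2, y2, z2) with x1 odd and x2 even. Then the multiplicative order u of b modulo c is even and b^(u/2) ≡ -1 (mod c). -/
/-!
Reducing both equations modulo `c` gives `a ^ xᵢ ≡ -b ^ yᵢ`. Raising the first to the even power
`x₂` and the second to the odd power `x₁` yields `b ^ (y₁ x₂) ≡ -b ^ (y₂ x₁)`, and since `b` is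
invertible modulo `c`, some power of `b` is `-1`. An element `g` with `g ^ k = h` for an
involution `h ≠ 1` has even order `u = 2v`, and `k` is an odd multiple of `v`, so `g ^ v = h`.
-/

theorem Nat.even_and_exists_odd_mul_of_dvd_two_mul {u k : ℕ} (hdvd : u ∣ 2 * k)
    (hndvd : ¬ u ∣ k) : Even u ∧ ∃ s, Odd s ∧ k = u / 2 * s := by
  obtain ⟨s, hs⟩ := hdvd
  have hs_odd : Odd s := by
    refine Nat.not_even_iff_odd.mp fun ⟨t, ht⟩ => hndvd ⟨t, ?_⟩
    rw [ht, ← two_mul, mul_left_comm] at hs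
    exact Nat.eq_of_mul_eq_mul_left two_pos hs
  have hu_even : Even u := by
    have : Even (u * s) := hs ▸ even_two_mul k
    exact (Nat.even_mul.mp this).resolve_right (Nat.not_even_iff_odd.mpr hs_odd)
  obtain ⟨v, rfl⟩ := hu_even
  refine ⟨⟨v, rfl⟩, s, hs_odd, ?_⟩
  rw [← two_mul, Nat.mul_div_cancel_left v two_pos]
  rw [← two_mul, mul_assoc] at hs
  exact Nat.eq_of_mul_eq_mul_left two_pos hs

theorem even_orderOf_and_pow_orderOf_div_two_eq {M : Type*} [Monoid M] {g h : M} {k : ℕ}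
    (hk : g ^ k = h) (hh : h ≠ 1) (hh_sq : h ^ 2 = 1) :
    Even (orderOf g) ∧ g ^ (orderOf g / 2) = h := by
  have hdvd : orderOf g ∣ 2 * k :=
    orderOf_dvd_of_pow_eq_one (by rw [mul_comm, pow_mul, hk, hh_sq])
  have hndvd : ¬ orderOf g ∣ k := fun hd => hh (hk ▸ orderOf_dvd_iff_pow_eq_one.mp hd)
  obtain ⟨heven, s, ⟨t, rfl⟩, rfl⟩ := Nat.even_and_exists_odd_mul_of_dvd_two_mul hdvd hndvd
  have hsq : (g ^ (orderOf g / 2)) ^ 2 = 1 := by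
    rw [← pow_mul, Nat.div_mul_cancel heven.two_dvd, pow_orderOf_eq_one]
  refine ⟨heven, ?_⟩
  rw [← hk, pow_mul, pow_succ, pow_mul, hsq, one_pow, one_mul]

section HasDistribNeg

variable {M : Type*} [Monoid M] [HasDistribNeg M]

theorem pow_mul_eq_neg_pow_mul_of_odd_of_even {A B : M} {x₁ y₁ x₂ y₂ : ℕ}
    (h₁ : A ^ x₁ = -B ^ y₁) (h₂ : A ^ x₂ = -B ^ y₂) (hodd : Odd x₁) (heven : Even x₂) :
    B ^ (y₁ * x₂) = -B ^ (y₂ * x₁) :=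
  calc B ^ (y₁ * x₂) = (-B ^ y₁) ^ x₂ := by rw [heven.neg_pow, pow_mul]
    _ = (-B ^ y₂) ^ x₁ := by rw [← h₁, ← h₂, ← pow_mul, ← pow_mul, mul_comm]
    _ = -B ^ (y₂ * x₁) := by rw [hodd.neg_pow, pow_mul]

theorem IsUnit.exists_pow_eq_neg_one_of_pow_eq_neg_pow {B : M} (hB : IsUnit B) {m n : ℕ}
    (h : B ^ m = -B ^ n) : ∃ k, B ^ k = -1 := by
  wlog hnm : n ≤ m generalizing m n
  · exact this (neg_eq_iff_eq_neg.mp h.symm) (le_of_not_ge hnm)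
  refine ⟨m - n, (hB.pow n).mul_right_cancel ?_⟩
  rw [← pow_add, Nat.sub_add_cancel hnm, h, neg_one_mul]

end HasDistribNeg

theorem Nat.Coprime.coprime_of_add_pow_eq_pow {a b c x y z : ℕ} (hab : a.Coprime b)
    (hy : y ≠ 0) (hz : z ≠ 0) (h : a ^ x + b ^ y = c ^ z) : b.Coprime c := by
  have hb : b.Coprime (a ^ x + b ^ y) := by
    rw [← Nat.succ_pred_eq_of_ne_zero hy, pow_succ, Nat.coprime_add_mul_right_right]
    exact hab.symm.pow_right x
  rwa [h, Nat.coprime_pow_right_iff (Nat.pos_of_ne_zero hz)] at hb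

theorem ZMod.natCast_pow_eq_neg_pow_of_add_pow_eq_pow {a b c x y z : ℕ} (hz : z ≠ 0)
    (h : a ^ x + b ^ y = c ^ z) : (a : ZMod c) ^ x = -(b : ZMod c) ^ y := by
  have hc := congrArg (Nat.cast : ℕ → ZMod c) h
  push_cast [ZMod.natCast_self, zero_pow hz] at hc
  exact eq_neg_of_add_eq_zero_left hc

theorem odd_even_x_order_b_general (a b c : ℕ)
    (hab : Nat.Coprime a b) (hc : 1 < c) (hcodd : Odd c)
    (x₁ y₁ z₁ x₂ y₂ z₂ : ℕ) (hy₁ : 0 < y₁) (hz₁ : 0 < z₁)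
    (hz₂ : 0 < z₂)
    (heq₁ : a ^ x₁ + b ^ y₁ = c ^ z₁) (heq₂ : a ^ x₂ + b ^ y₂ = c ^ z₂)
    (hodd : Odd x₁) (heven : Even x₂) :
    Even (orderOf (b : ZMod c)) ∧ (b : ZMod c) ^ (orderOf (b : ZMod c) / 2) = -1 := by
  have : Fact (2 < c) := ⟨by obtain ⟨k, rfl⟩ := hcodd; omega⟩
  have hb : IsUnit (b : ZMod c) :=
    (ZMod.isUnit_iff_coprime b c).mpr (hab.coprime_of_add_pow_eq_pow hy₁.ne' hz₁.ne' heq₁)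
  have hb_pow : (b : ZMod c) ^ (y₁ * x₂) = -(b : ZMod c) ^ (y₂ * x₁) :=
    pow_mul_eq_neg_pow_mul_of_odd_of_even
      (ZMod.natCast_pow_eq_neg_pow_of_add_pow_eq_pow hz₁.ne' heq₁)
      (ZMod.natCast_pow_eq_neg_pow_of_add_pow_eq_pow hz₂.ne' heq₂) hodd heven
  obtain ⟨k, hk⟩ := hb.exists_pow_eq_neg_one_of_pow_eq_neg_pow hb_pow
  exact even_orderOf_and_pow_orderOf_div_two_eq hk ZMod.neg_one_ne_one neg_one_sq

/-- Suppose `a^x + b^y = c^z` has two positive solutions with `x₁` odd and `x₂` even.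
Then the multiplicative order `u` of `b` modulo `c` is even and `b^(u/2) ≡ -1 (mod c)`. -/
theorem odd_even_x_order_b (a b c : ℕ) (ha : 1 < a) (hb : 1 < b)
    (hab : Nat.Coprime a b) (hc : 1 < c) (hcodd : Odd c)
    (x₁ y₁ z₁ x₂ y₂ z₂ : ℕ) (hx₁ : 0 < x₁) (hy₁ : 0 < y₁) (hz₁ : 0 < z₁)
    (hx₂ : 0 < x₂) (hy₂ : 0 < y₂) (hz₂ : 0 < z₂)
    (heq₁ : a ^ x₁ + b ^ y₁ = c ^ z₁) (heq₂ : a ^ x₂ + b ^ y₂ = c ^ z₂)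
    (hodd : Odd x₁) (heven : Even x₂) :
    Even (orderOf (b : ZMod c)) ∧ (b : ZMod c) ^ (orderOf (b : ZMod c) / 2) = -1 :=
  odd_even_x_order_b_general a b c hab hc hcodd x₁ y₁ z₁ x₂ y₂ z₂ hy₁ hz₁ hz₂ heq₁ heq₂ hodd heven
end

section
/- Let a and b be relatively prime integers both greater than 1 and let c be an odd integer greater than 1. Suppose (x1, y1, z1) and (x2, y2, z2) are solutions in positive integers to a^x + b^y = c^z lying in the same parity class, with x1 ≤ x2 and y1 ≤ y2. If δ is an integer satisfying a^((x2 - x1)/2) ≡ δ · b^((y2 - y1)/2) (mod c), then δ^2 ≡ 1 (mod c). -/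
/-!
Modulo `c` both solutions read `a^x + b^y ≡ 0`, and `a`, `b` are units mod `c` because any common
factor of `a` and `c` would divide `b^y`. Writing `x₂ = x₁ + 2u`, `y₂ = y₁ + 2v` and dividing the
second congruence by the first gives `a^(2u) ≡ b^(2v)`; squaring `a^u ≡ δ b^v` then forces `δ² ≡ 1`.
-/

theorem Nat.Coprime.coprime_of_pow_add_pow_eq_pow {a b c x y z : ℕ} (hab : a.Coprime b)
    (hx : 0 < x) (hz : 0 < z) (h : a ^ x + b ^ y = c ^ z) : a.Coprime c := by
  have : (a ^ x).Coprime (c ^ z) := by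
    rw [← h, add_comm, Nat.coprime_add_self_right]
    exact (hab.pow_left x).pow_right y
  exact (Nat.coprime_pow_left_iff hx _ _).1 ((Nat.coprime_pow_right_iff hz _ _).1 this)

theorem ZMod.natCast_pow_add_natCast_pow_eq_zero {a b c x y z : ℕ} (hz : z ≠ 0)
    (h : a ^ x + b ^ y = c ^ z) : (a : ZMod c) ^ x + (b : ZMod c) ^ y = 0 := by
  exact_mod_cast (congrArg (Nat.cast : ℕ → ZMod c) h).trans (by simp [hz])

theorem pow_eq_pow_of_pow_add_pow_eq_zero {R : Type*} [CommRing R] {A B : R} (hA : IsUnit A)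
    {x y u v : ℕ} (h₁ : A ^ x + B ^ y = 0) (h₂ : A ^ (x + u) + B ^ (y + v) = 0) :
    A ^ u = B ^ v := by
  have : A ^ x * (A ^ u - B ^ v) = 0 := by
    rw [pow_add, pow_add] at h₂
    linear_combination h₂ - B ^ v * h₁
  exact sub_eq_zero.1 ((hA.pow x).mul_right_eq_zero.1 this)

theorem sq_eq_one_of_eq_mul_of_sq_eq_sq {M : Type*} [CommMonoid M] {α β δ : M} (hβ : IsUnit β)
    (h : α = δ * β) (hsq : α ^ 2 = β ^ 2) : δ ^ 2 = 1 := by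
  rw [h, mul_pow] at hsq
  exact (hβ.pow 2).mul_left_inj.1 (hsq.trans (one_mul _).symm)

theorem delta_sq_congruent_one_general (a b c : ℕ)
    (hab : Nat.Coprime a b)
    (x₁ y₁ z₁ x₂ y₂ z₂ : ℕ) (hx₁ : 0 < x₁) (hy₁ : 0 < y₁) (hz₁ : 0 < z₁)
    (hz₂ : 0 < z₂)
    (heq₁ : a ^ x₁ + b ^ y₁ = c ^ z₁) (heq₂ : a ^ x₂ + b ^ y₂ = c ^ z₂)
    (hparx : x₁ % 2 = x₂ % 2) (hpary : y₁ % 2 = y₂ % 2)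
    (hxle : x₁ ≤ x₂) (hyle : y₁ ≤ y₂)
    (δ : ℤ) (hδ : (a : ℤ) ^ ((x₂ - x₁) / 2) ≡ δ * (b : ℤ) ^ ((y₂ - y₁) / 2) [ZMOD (c : ℤ)]) :
    δ ^ 2 ≡ 1 [ZMOD (c : ℤ)] := by
  set u := (x₂ - x₁) / 2
  set v := (y₂ - y₁) / 2
  have hx₂ : x₂ = x₁ + 2 * u := by omega
  have hy₂ : y₂ = y₁ + 2 * v := by omega
  have hA : IsUnit (a : ZMod c) :=
    (ZMod.isUnit_iff_coprime a c).2 (hab.coprime_of_pow_add_pow_eq_pow hx₁ hz₁ heq₁)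
  have hB : IsUnit (b : ZMod c) :=
    (ZMod.isUnit_iff_coprime b c).2
      (hab.symm.coprime_of_pow_add_pow_eq_pow hy₁ hz₁ ((add_comm _ _).trans heq₁))
  have h₁ := ZMod.natCast_pow_add_natCast_pow_eq_zero hz₁.ne' heq₁
  have h₂ := ZMod.natCast_pow_add_natCast_pow_eq_zero hz₂.ne' heq₂
  rw [hx₂, hy₂] at h₂
  have hsq : ((a : ZMod c) ^ u) ^ 2 = ((b : ZMod c) ^ v) ^ 2 := by
    rw [← pow_mul', ← pow_mul']
    exact pow_eq_pow_of_pow_add_pow_eq_zero hA h₁ h₂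
  have hδ' : (a : ZMod c) ^ u = δ * (b : ZMod c) ^ v := by
    exact_mod_cast (ZMod.intCast_eq_intCast_iff _ _ c).2 hδ
  rw [← ZMod.intCast_eq_intCast_iff]
  push_cast
  exact sq_eq_one_of_eq_mul_of_sq_eq_sq (hB.pow v) hδ' hsq

/-- Suppose `(x₁, y₁, z₁)` and `(x₂, y₂, z₂)` are positive solutions of `a^x + b^y = c^z`
in the same parity class with `x₁ ≤ x₂` and `y₁ ≤ y₂`. If `δ` is an integer with
`a^((x₂-x₁)/2) ≡ δ * b^((y₂-y₁)/2) (mod c)`, then `δ² ≡ 1 (mod c)`. -/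
theorem delta_sq_congruent_one (a b c : ℕ) (ha : 1 < a) (hb : 1 < b)
    (hab : Nat.Coprime a b) (hc : 1 < c) (hcodd : Odd c)
    (x₁ y₁ z₁ x₂ y₂ z₂ : ℕ) (hx₁ : 0 < x₁) (hy₁ : 0 < y₁) (hz₁ : 0 < z₁)
    (hx₂ : 0 < x₂) (hy₂ : 0 < y₂) (hz₂ : 0 < z₂)
    (heq₁ : a ^ x₁ + b ^ y₁ = c ^ z₁) (heq₂ : a ^ x₂ + b ^ y₂ = c ^ z₂)
    (hparx : x₁ % 2 = x₂ % 2) (hpary : y₁ % 2 = y₂ % 2)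
    (hxle : x₁ ≤ x₂) (hyle : y₁ ≤ y₂)
    (δ : ℤ) (hδ : (a : ℤ) ^ ((x₂ - x₁) / 2) ≡ δ * (b : ℤ) ^ ((y₂ - y₁) / 2) [ZMOD (c : ℤ)]) :
    δ ^ 2 ≡ 1 [ZMOD (c : ℤ)] :=
  delta_sq_congruent_one_general a b c hab x₁ y₁ z₁ x₂ y₂ z₂ hx₁ hy₁ hz₁ hz₂ heq₁ heq₂ hparx hpary
    hxle hyle δ hδ
end

section
/- The equation 3^x + 10^y = 13^z has exactly two solutions in positive integers (x, y, z), namely (x, y, z) = (1, 1, 1) and (x, y, z) = (7, 1, 3). -/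
/-!
Modulo `364 = 4 · 7 · 13` the powers of `3`, of `10` from `10²` on, and of `13` from `13¹` on are
periodic with periods `6`, `6` and `2`, and no combination of them solves the equation; so `y = 1`.
If moreover `x ≥ 8`, then `13ᶻ ≡ 10 (mod 3⁸)`, which pins down `z ≡ 1461 (mod 3⁷)` because `13` has
order `3⁷` modulo `3⁸`. Modulo the prime `17497 = 8 · 3⁷ + 1`, where `3` has order `729` and `13`
order `4 · 3⁷`, this leaves four residues for `13ᶻ`, none of the form `3ˣ + 10`.
The finitely many `x < 8` are checked directly.
-/

theorem pow_add_eq_pow_add_mod {M : Type*} [Monoid M] {a : M} {s n : ℕ}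
    (h : a ^ (s + n) = a ^ s) (x : ℕ) : a ^ (s + x) = a ^ (s + x % n) := by
  have periodic : ∀ k, a ^ (s + n * k) = a ^ s := by
    intro k
    induction k with
    | zero => simp
    | succ k ih => rw [Nat.mul_succ, ← add_assoc, pow_add, ih, ← pow_add, h]
  conv_lhs => rw [← Nat.mod_add_div x n]
  rw [add_comm (x % n), ← add_assoc, pow_add, periodic, pow_add]

theorem Nat.pow_add_modEq_pow_add_mod {a m s n : ℕ} (h : a ^ (s + n) ≡ a ^ s [MOD m]) (x : ℕ) :
    a ^ (s + x) ≡ a ^ (s + x % n) [MOD m] := by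
  rw [← ZMod.natCast_eq_natCast_iff] at h ⊢
  push_cast at h ⊢
  exact pow_add_eq_pow_add_mod h x

theorem Nat.pow_modEq_pow_mod {a m n : ℕ} (h : a ^ n ≡ 1 [MOD m]) (x : ℕ) :
    a ^ x ≡ a ^ (x % n) [MOD m] := by
  simpa using Nat.pow_add_modEq_pow_add_mod (s := 0) (by simpa using h) x

theorem eq_one_of_three_pow_add_ten_pow_eq_thirteen_pow {x y z : ℕ} (hy : 0 < y) (hz : 0 < z)
    (h : 3 ^ x + 10 ^ y = 13 ^ z) : y = 1 := by
  by_contra hy1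
  obtain ⟨y, rfl⟩ : ∃ k, y = 2 + k := ⟨y - 2, by omega⟩
  obtain ⟨z, rfl⟩ : ∃ k, z = 1 + k := ⟨z - 1, by omega⟩
  have no_solution_mod : ∀ u < 6, ∀ v < 6, ∀ w < 2,
      ¬ 3 ^ u + 10 ^ (2 + v) ≡ 13 ^ (1 + w) [MOD 364] := by decide
  refine no_solution_mod (x % 6) (Nat.mod_lt _ (by norm_num)) (y % 6) (Nat.mod_lt _ (by norm_num))
    (z % 2) (Nat.mod_lt _ (by norm_num)) ?_
  calc 3 ^ (x % 6) + 10 ^ (2 + y % 6)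
      ≡ 3 ^ x + 10 ^ (2 + y) [MOD 364] :=
        ((Nat.pow_modEq_pow_mod (by decide) x).add
          (Nat.pow_add_modEq_pow_add_mod (by decide) y)).symm
    _ = 13 ^ (1 + z) := h
    _ ≡ 13 ^ (1 + z % 2) [MOD 364] := Nat.pow_add_modEq_pow_add_mod (by decide) z

theorem lt_eight_of_three_pow_add_ten_eq_thirteen_pow {x z : ℕ} (h : 3 ^ x + 10 = 13 ^ z) :
    x < 8 := by
  by_contra! hx
  have hz : z % 2187 = 1461 := by
    have only_root : ∀ w < 2187, 13 ^ w ≡ 10 [MOD 6561] → w = 1461 := by decide +kernel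
    refine only_root _ (Nat.mod_lt _ (by norm_num)) ?_
    have h3 : 3 ^ x ≡ 0 [MOD 6561] :=
      Nat.modEq_zero_iff_dvd.mpr (pow_dvd_pow 3 hx)
    calc 13 ^ (z % 2187) ≡ 13 ^ z [MOD 6561] :=
          (Nat.pow_modEq_pow_mod (by decide +kernel) z).symm
      _ = 3 ^ x + 10 := h.symm
      _ ≡ 0 + 10 [MOD 6561] := h3.add_right 10
  have no_solution_mod : ∀ u < 729, ∀ j < 4,
      ¬ 3 ^ u + 10 ≡ 13 ^ (1461 + 2187 * j) [MOD 17497] := by decide +kernel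
  have hz_mod : z % 8748 = 1461 + 2187 * (z % 8748 / 2187) := by omega
  refine no_solution_mod (x % 729) (Nat.mod_lt _ (by norm_num)) (z % 8748 / 2187) (by omega) ?_
  calc 3 ^ (x % 729) + 10 ≡ 3 ^ x + 10 [MOD 17497] :=
        ((Nat.pow_modEq_pow_mod (by decide +kernel) x).add_right 10).symm
    _ = 13 ^ z := h
    _ ≡ 13 ^ (z % 8748) [MOD 17497] := Nat.pow_modEq_pow_mod (by decide +kernel) z
    _ = _ := by rw [← hz_mod]

theorem three_pow_add_ten_eq_thirteen_pow_of_lt_eight {x z : ℕ} (hx : x < 8)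
    (h : 3 ^ x + 10 = 13 ^ z) : x = 1 ∧ z = 1 ∨ x = 7 ∧ z = 3 := by
  have hz : z < 4 := by
    have : 13 ^ z < 13 ^ 4 := h ▸ (by interval_cases x <;> norm_num)
    exact (Nat.pow_lt_pow_iff_right (by norm_num)).mp this
  interval_cases x <;> interval_cases z <;> simp_all

/-- The equation `3^x + 10^y = 13^z` has exactly two solutions in positive integers
`(x, y, z)`, namely `(1, 1, 1)` and `(7, 1, 3)`. -/
theorem solutions_3_10_13 :
    {p : ℕ × ℕ × ℕ | 0 < p.1 ∧ 0 < p.2.1 ∧ 0 < p.2.2 ∧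
      3 ^ p.1 + 10 ^ p.2.1 = 13 ^ p.2.2} = {(1, 1, 1), (7, 1, 3)} := by
  ext ⟨x, y, z⟩
  simp only [Set.mem_ofPred_eq, Set.mem_insert_iff, Set.mem_singleton_iff, Prod.mk.injEq]
  constructor
  · rintro ⟨-, hy, hz, h⟩
    obtain rfl := eq_one_of_three_pow_add_ten_pow_eq_thirteen_pow hy hz h
    rw [pow_one] at h
    have := three_pow_add_ten_eq_thirteen_pow_of_lt_eight
      (lt_eight_of_three_pow_add_ten_eq_thirteen_pow h) h
    tauto
  · rintro (⟨rfl, rfl, rfl⟩ | ⟨rfl, rfl, rfl⟩) <;> norm_num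
end
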